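/- π ∫₀^∞ 1/(e^x + 1) dx = (1/2) ∫₀^π (y·sin y)/(1 − cos y) dy; equivalently, ∫₀^π (y·sin y)/(1 − cos y) dy = 2π·log 2. -/

import Mathlib

/-!
The first integral is `log 2`, with antiderivative `-log (1 + e^{-x})`. For the second, integrate
by parts against `y ↦ y log (1 - cos y)`, which tends to `0` at `0` and equals `π log 2` at `π`;
since `1 - cos y = 2 sin² (y / 2)`, the remaining `∫₀^π log (1 - cos y)` reduces to the classical
`∫₀^{π/2} log sin = -(π / 2) log 2`.
-/

open Real MeasureTheory intervalIntegral Set Filter Topology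

theorem integral_Ioi_one_div_exp_add_one (a : ℝ) :
    ∫ x in Ioi a, 1 / (exp x + 1) = log (1 + exp (-a)) := by
  have hderiv : ∀ x ∈ Ici a,
      HasDerivAt (fun x ↦ -log (1 + exp (-x))) (1 / (exp x + 1)) x := by
    intro x _
    refine (((hasDerivAt_neg x).exp.const_add 1).log (by positivity)).neg.congr_deriv ?_
    rw [exp_neg]
    field_simp
  have hlim : Tendsto (fun x ↦ -log (1 + exp (-x))) atTop (𝓝 0) := by
    simpa using ((tendsto_exp_neg_atTop_nhds_zero.const_add 1).log (by norm_num)).neg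
  rw [integral_Ioi_of_hasDerivAt_of_nonneg' hderiv (fun x _ ↦ by positivity) hlim]
  ring

theorem one_sub_cos_eq_two_mul_sin_sq (y : ℝ) : 1 - cos y = 2 * sin (y / 2) ^ 2 := by
  rw [sin_sq_eq_half_sub]
  ring_nf

theorem log_one_sub_cos {y : ℝ} (hy : sin (y / 2) ≠ 0) :
    log (1 - cos y) = log 2 + 2 * log (sin (y / 2)) := by
  rw [one_sub_cos_eq_two_mul_sin_sq, log_mul two_ne_zero (by positivity), log_pow]
  push_cast
  ring

theorem integral_log_one_sub_cos : ∫ y in 0..π, log (1 - cos y) = -π * log 2 := by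
  have hsin : IntervalIntegrable (fun y ↦ log (sin (y / 2))) volume 0 π := by
    simpa [div_eq_inv_mul] using
      (intervalIntegrable_log_sin (a := 0) (b := π / 2)).comp_mul_left (c := 2⁻¹)
  calc ∫ y in 0..π, log (1 - cos y)
      = ∫ y in 0..π, (log 2 + 2 * log (sin (y / 2))) := by
        refine integral_congr_ae (Eventually.of_forall fun y hy ↦ log_one_sub_cos ?_)
        rw [uIoc_of_le pi_pos.le] at hy
        exact (sin_pos_of_pos_of_lt_pi (by linarith [hy.1]) (by linarith [hy.2, pi_pos])).ne'
    _ = π * log 2 + 2 * (2 * ∫ x in 0..π / 2, log (sin x)) := by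
        rw [integral_add intervalIntegrable_const (hsin.const_mul 2),
          intervalIntegral.integral_const_mul,
          intervalIntegral.integral_comp_div (fun x ↦ log (sin x)) two_ne_zero]
        simp
    _ = -π * log 2 := by
        rw [integral_log_sin_zero_pi_div_two]
        ring

theorem two_mul_sq_div_pi_sq_le_one_sub_cos {y : ℝ} (hy : |y| ≤ π) :
    2 * (y / π) ^ 2 ≤ 1 - cos y := by
  have := cos_le_one_sub_mul_cos_sq hy
  rw [div_pow]
  linarith [show 2 / π ^ 2 * y ^ 2 = 2 * (y ^ 2 / π ^ 2) by ring]

theorem mul_sin_div_one_sub_cos_mem_Icc {y : ℝ} (hy : y ∈ Ioc 0 π) :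
    y * sin y / (1 - cos y) ∈ Icc 0 (π ^ 2 / 2) := by
  obtain ⟨hy0, hyπ⟩ := hy
  have hlow := two_mul_sq_div_pi_sq_le_one_sub_cos (abs_le.2 ⟨by linarith [pi_pos], hyπ⟩)
  have hpos : 0 < 1 - cos y := lt_of_lt_of_le (by positivity) hlow
  have hsin : 0 ≤ sin y := sin_nonneg_of_nonneg_of_le_pi hy0.le hyπ
  refine ⟨by positivity, ?_⟩
  rw [div_le_iff₀ hpos]
  calc y * sin y ≤ y * y := mul_le_mul_of_nonneg_left (sin_le hy0.le) hy0.le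
    _ = π ^ 2 / 2 * (2 * (y / π) ^ 2) := by field_simp
    _ ≤ π ^ 2 / 2 * (1 - cos y) := by gcongr

theorem intervalIntegrable_mul_sin_div_one_sub_cos :
    IntervalIntegrable (fun y ↦ y * sin y / (1 - cos y)) volume 0 π := by
  refine (intervalIntegrable_const (c := π ^ 2 / 2)).mono_fun'
    (by fun_prop : Measurable _).aestronglyMeasurable ?_
  rw [uIoc_of_le pi_pos.le]
  filter_upwards [ae_restrict_mem measurableSet_Ioc] with y hy
  obtain ⟨hnonneg, hle⟩ := mul_sin_div_one_sub_cos_mem_Icc hy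
  rwa [norm_of_nonneg hnonneg]

theorem hasDerivAt_mul_log_one_sub_cos {y : ℝ} (hy : cos y ≠ 1) :
    HasDerivAt (fun y ↦ y * log (1 - cos y))
      (log (1 - cos y) + y * sin y / (1 - cos y)) y := by
  have hne : 1 - cos y ≠ 0 := sub_ne_zero.2 hy.symm
  refine ((hasDerivAt_id y).mul (((hasDerivAt_cos y).const_sub 1).log hne)).congr_deriv ?_
  simp only [id, neg_neg]
  ring

theorem log_one_sub_cos_mem_Icc {y : ℝ} (hy : y ∈ Ioc 0 π) :
    log (1 - cos y) ∈ Icc (log 2 + 2 * log (y / π)) (log 2) := by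
  obtain ⟨hy0, hyπ⟩ := hy
  have hlow := two_mul_sq_div_pi_sq_le_one_sub_cos (abs_le.2 ⟨by linarith [pi_pos], hyπ⟩)
  have hsq : 0 < 2 * (y / π) ^ 2 := by positivity
  constructor
  · calc log 2 + 2 * log (y / π) = log (2 * (y / π) ^ 2) := by
          rw [log_mul two_ne_zero (by positivity), log_pow]
          push_cast
          ring
      _ ≤ log (1 - cos y) := log_le_log hsq hlow
  · exact log_le_log (hsq.trans_le hlow) (by linarith [neg_one_le_cos y])

theorem tendsto_mul_log_one_sub_cos_nhdsGT_zero :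
    Tendsto (fun y ↦ y * log (1 - cos y)) (𝓝[>] 0) (𝓝 0) := by
  have hlower : Tendsto (fun y ↦ y * (log 2 + 2 * log (y / π))) (𝓝[>] 0) (𝓝 0) := by
    -- `y log (y / π) = π (t log t)` with `t = y / π`, and `t log t` is continuous at `0`
    have hcont : Continuous fun y ↦ y * log 2 + 2 * π * (y / π * log (y / π)) := by
      have := continuous_mul_log.comp (continuous_id.div_const π)
      fun_prop
    have hlim := (hcont.tendsto 0).mono_left (nhdsWithin_le_nhds (s := Ioi 0))
    simp only [zero_mul, zero_div, mul_zero, add_zero] at hlim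
    refine hlim.congr' (Eventually.of_forall fun y ↦ ?_)
    field_simp
  have hupper : Tendsto (fun y ↦ y * log 2) (𝓝[>] 0) (𝓝 0) := by
    have : Continuous fun y : ℝ ↦ y * log 2 := by fun_prop
    simpa using (this.tendsto 0).mono_left nhdsWithin_le_nhds
  refine tendsto_of_tendsto_of_tendsto_of_le_of_le' hlower hupper ?_ ?_ <;>
    filter_upwards [Ioo_mem_nhdsGT pi_pos] with y hy <;>
    have hbounds := log_one_sub_cos_mem_Icc (Ioo_subset_Ioc_self hy)
  exacts [mul_le_mul_of_nonneg_left hbounds.1 hy.1.le, mul_le_mul_of_nonneg_left hbounds.2 hy.1.le]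

theorem integral_mul_sin_div_one_sub_cos :
    ∫ y in 0..π, y * sin y / (1 - cos y) = 2 * π * log 2 := by
  have hlog : IntervalIntegrable (fun y ↦ log (1 - cos y)) volume 0 π :=
    (analyticOnNhd_const.sub analyticOnNhd_cos).meromorphicOn.intervalIntegrable_log
  have hderiv : ∀ y ∈ Ioo 0 π, HasDerivAt (fun y ↦ y * log (1 - cos y))
      (log (1 - cos y) + y * sin y / (1 - cos y)) y := fun y hy ↦
    hasDerivAt_mul_log_one_sub_cos ((cos_eq_one_iff_of_lt_of_lt (by linarith [hy.1, pi_pos])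
      (by linarith [hy.2, pi_pos])).not.2 hy.1.ne')
  have hπ : Tendsto (fun y ↦ y * log (1 - cos y)) (𝓝[<] π) (𝓝 (π * log 2)) := by
    have : ContinuousAt (fun y ↦ y * log (1 - cos y)) π :=
      continuousAt_id.mul ((continuous_const.sub continuous_cos).continuousAt.log (by simp))
    simpa [cos_pi, one_add_one_eq_two] using
      this.tendsto.mono_left (nhdsWithin_le_nhds (s := Iio π))
  have hFTC := integral_eq_sub_of_hasDerivAt_of_tendsto pi_pos hderiv
    (hlog.add intervalIntegrable_mul_sin_div_one_sub_cos)
    tendsto_mul_log_one_sub_cos_nhdsGT_zero hπ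
  rw [integral_add hlog intervalIntegrable_mul_sin_div_one_sub_cos,
    integral_log_one_sub_cos] at hFTC
  linarith

/-- `π ∫₀^∞ dx/(e^x+1) = (1/2) ∫₀^π y sin y/(1 − cos y) dy`, and equivalently the latter
integral equals `2π log 2`. -/
theorem pi_mul_integral_eq :
    π * (∫ x in Set.Ioi (0 : ℝ), 1 / (Real.exp x + 1)) =
      (1 / 2) * (∫ y in (0 : ℝ)..π, y * Real.sin y / (1 - Real.cos y)) ∧
    (∫ y in (0 : ℝ)..π, y * Real.sin y / (1 - Real.cos y)) = 2 * π * Real.log 2 := by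
  refine ⟨?_, integral_mul_sin_div_one_sub_cos⟩
  rw [integral_Ioi_one_div_exp_add_one, integral_mul_sin_div_one_sub_cos]
  norm_num
  ring
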